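/- arXiv:1601.07743 — 2 statements merged into one kernel-verified Lean document; each statement's English description precedes it below -/
import Mathlib

section
/- For every λ > 0, n ∈ ℕ₀ and x ∈ [−1,1], d/dx{(1−x) C_n^λ(x)} = −(n+1) C_n^λ(x) + 2 Σ_{k=0}^{n−1} (−1)^{k+n+1} (k+λ) C_k^λ(x). -/
open Real MeasureTheory Finset intervalIntegral

noncomputable section

/-- The Gegenbauer (ultraspherical) polynomial `C_n^λ`. -/
def Gegenbauer (lam : ℝ) (n : ℕ) (x : ℝ) : ℝ :=
  ∑ k ∈ Finset.range (n / 2 + 1),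
    ((-1 : ℝ) ^ k * Real.Gamma ((n : ℝ) - (k : ℝ) + lam) /
      (Real.Gamma lam * (Nat.factorial k : ℝ) * (Nat.factorial (n - 2 * k) : ℝ))) *
      (2 * x) ^ (n - 2 * k)

/-- The terminating hypergeometric polynomial `₂F₁(−m, b; c; z)`. -/
def hyp2F1 (m : ℕ) (b c z : ℝ) : ℝ :=
  ∑ k ∈ Finset.range (m + 1),
    ((ascPochhammer ℝ k).eval (-(m : ℝ)) * (ascPochhammer ℝ k).eval b) /
      ((ascPochhammer ℝ k).eval c * (Nat.factorial k : ℝ)) * z ^ k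

/-- The half-step fractional integral `I^λ_+`. -/
def Iplus (lam : ℝ) (f : ℝ → ℝ) (x : ℝ) : ℝ :=
  (1 + x) ^ (-lam + 1 / 2) *
    ∫ τ in (-1 : ℝ)..x, (x - τ) ^ (-(1 / 2) : ℝ) * (1 + τ) ^ lam * f τ

/-- The half-step fractional integral `I^λ_−`. -/
def Iminus (lam : ℝ) (f : ℝ → ℝ) (x : ℝ) : ℝ :=
  (1 - x) ^ (-lam + 1 / 2) *
    ∫ τ in x..(1 : ℝ), (τ - x) ^ (-(1 / 2) : ℝ) * (1 - τ) ^ lam * f τ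

/-- `𝓘^λ_+ = I^λ_+ + I^λ_−`. -/
def calIplus (lam : ℝ) (f : ℝ → ℝ) (x : ℝ) : ℝ := Iplus lam f x + Iminus lam f x

/-- `𝓘^λ_− = I^λ_+ − I^λ_−`. -/
def calIminus (lam : ℝ) (f : ℝ → ℝ) (x : ℝ) : ℝ := Iplus lam f x - Iminus lam f x

/-- The half-step fractional derivative `D^λ_+`. -/
def Dplus (lam : ℝ) (f : ℝ → ℝ) (x : ℝ) : ℝ :=
  (1 + x) *
    deriv (fun y : ℝ => (1 + y) ^ (-lam) *
      ∫ τ in (-1 : ℝ)..y, (y - τ) ^ (-(1 / 2) : ℝ) * (1 + τ) ^ (lam - 1 / 2) * f τ) x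

/-- The half-step fractional derivative `D^λ_−`. -/
def Dminus (lam : ℝ) (f : ℝ → ℝ) (x : ℝ) : ℝ :=
  (1 - x) *
    deriv (fun y : ℝ => (1 - y) ^ (-lam) *
      ∫ τ in y..(1 : ℝ), (τ - y) ^ (-(1 / 2) : ℝ) * (1 - τ) ^ (lam - 1 / 2) * f τ) x

/-- `𝓓^λ_+ = D^λ_+ + D^λ_−`. -/
def calDplus (lam : ℝ) (f : ℝ → ℝ) (x : ℝ) : ℝ := Dplus lam f x + Dminus lam f x

/-- `𝓓^λ_− = D^λ_+ − D^λ_−`. -/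
def calDminus (lam : ℝ) (f : ℝ → ℝ) (x : ℝ) : ℝ := Dplus lam f x - Dminus lam f x

/-- Normalization constant `h_n^λ` for the Gegenbauer system. -/
def hGeg (lam : ℝ) (n : ℕ) : ℝ :=
  Real.pi * Real.Gamma (2 * lam + n) /
    ((2 : ℝ) ^ (2 * lam - 1) * (Nat.factorial n : ℝ) * (lam + n) * (Real.Gamma lam) ^ 2)

/-- The `n`-th Gegenbauer coefficient (parameter `λ`) of `g`. -/
def gegCoeff (lam : ℝ) (g : ℝ → ℝ) (n : ℕ) : ℝ :=
  (1 / hGeg lam n) *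
    ∫ t in (-1 : ℝ)..1, g t * Gegenbauer lam n t * (1 - t ^ 2) ^ (lam - 1 / 2)

/-- The Chebyshev polynomial of the first kind, as a real function. -/
def chebT (n : ℕ) (x : ℝ) : ℝ := (Polynomial.Chebyshev.T ℝ (n : ℤ)).eval x

/-- The `n`-th Chebyshev coefficient of `f`. -/
def chebCoeff (f : ℝ → ℝ) (n : ℕ) : ℝ :=
  if n = 0 then
    (1 / Real.pi) * ∫ t in (-1 : ℝ)..1, f t * (1 - t ^ 2) ^ (-(1 / 2) : ℝ)
  else
    (2 / Real.pi) * ∫ t in (-1 : ℝ)..1, f t * chebT n t * (1 - t ^ 2) ^ (-(1 / 2) : ℝ)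

/-- The Legendre polynomial `P_n = C_n^{1/2}`. -/
def legendreP (n : ℕ) (x : ℝ) : ℝ := Gegenbauer (1 / 2) n x

/-- The `n`-th Legendre coefficient of `g`. -/
def legCoeff (g : ℝ → ℝ) (n : ℕ) : ℝ :=
  ((2 * (n : ℝ) + 1) / 2) * ∫ x in (-1 : ℝ)..1, g x * legendreP n x

/-- `f` is (zonal) positive definite on the sphere `S^m ⊂ ℝ^{m+1}`. -/
def PosDefSphere (m : ℕ) (f : ℝ → ℝ) : Prop :=
  ∀ (n : ℕ) (x : Fin n → EuclideanSpace ℝ (Fin (m + 1))),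
    (∀ i, ‖x i‖ = 1) → Function.Injective x →
      ∀ c : Fin n → ℝ,
        0 ≤ ∑ i : Fin n, ∑ j : Fin n, c i * c j * f (inner ℝ (x i) (x j) : ℝ)

/-- `f` is (zonal) strictly positive definite on the sphere `S^m ⊂ ℝ^{m+1}`. -/
def StrictPosDefSphere (m : ℕ) (f : ℝ → ℝ) : Prop :=
  ∀ (n : ℕ) (x : Fin n → EuclideanSpace ℝ (Fin (m + 1))),
    (∀ i, ‖x i‖ = 1) → Function.Injective x →
      ∀ c : Fin n → ℝ, c ≠ 0 →
        0 < ∑ i : Fin n, ∑ j : Fin n, c i * c j * f (inner ℝ (x i) (x j) : ℝ)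

/-- `f ∈ Λ_m`: continuous on `[−1,1]` and positive definite on `S^m`. -/
def MemLambda (m : ℕ) (f : ℝ → ℝ) : Prop :=
  ContinuousOn f (Set.Icc (-1 : ℝ) 1) ∧ PosDefSphere m f

/-- `f ∈ Λ^+_m`: continuous on `[−1,1]` and strictly positive definite on `S^m`. -/
def MemLambdaPlus (m : ℕ) (f : ℝ → ℝ) : Prop :=
  ContinuousOn f (Set.Icc (-1 : ℝ) 1) ∧ StrictPosDefSphere m f

end

/-! Differentiating the defining sum termwise and comparing coefficients, whose ratios are
rational by `Γ(s + 1) = s Γ(s)`, gives the two relations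
`C'_{n+1} = (n + 2λ) C_n + x C'_n` and `x C'_{n+1} - (n + 1) C_{n+1} = C'_n`.
Their difference is a recursion for `(1 - x) C'_n - C_n`, which yields the sum by induction
on `n`. -/

noncomputable def gegenbauerCoeff (lam : ℝ) (n k : ℕ) : ℝ :=
  (-1 : ℝ) ^ k * Real.Gamma ((n : ℝ) - (k : ℝ) + lam) /
    (Real.Gamma lam * (Nat.factorial k : ℝ) * (Nat.factorial (n - 2 * k) : ℝ))

theorem gegenbauer_eq_sum (lam : ℝ) (n : ℕ) (x : ℝ) :
    Gegenbauer lam n x = ∑ k ∈ range (n / 2 + 1), gegenbauerCoeff lam n k * (2 * x) ^ (n - 2 * k) :=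
  rfl

theorem gegenbauerCoeff_succ (lam : ℝ) {n k : ℕ} (hk : 2 * k ≤ n) :
    ((n + 1 - 2 * k : ℕ) : ℝ) * gegenbauerCoeff lam (n + 1) k =
      ((n : ℝ) - k + lam) * gegenbauerCoeff lam n k := by
  by_cases hs : (n : ℝ) - k + lam = 0
  -- then `λ` is a non-positive integer, `Γ λ = 0`, and both sides are `0` by division by zero
  · have hΓ : Real.Gamma lam = 0 := by
      rw [show lam = -((n - k : ℕ) : ℝ) by push_cast [show k ≤ n by omega]; linarith]
      exact Real.Gamma_neg_nat_eq_zero _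
    simp [gegenbauerCoeff, hΓ]
  have hΓ : Real.Gamma (((n + 1 : ℕ) : ℝ) - k + lam) =
      ((n : ℝ) - k + lam) * Real.Gamma (n - k + lam) := by
    rw [← Real.Gamma_add_one hs]; push_cast; ring_nf
  rw [gegenbauerCoeff, gegenbauerCoeff, hΓ, show n + 1 - 2 * k = n - 2 * k + 1 by omega,
    Nat.factorial_succ, Nat.cast_mul, Nat.cast_add_one]
  have : ((n - 2 * k : ℕ) : ℝ) + 1 ≠ 0 := by positivity
  field_simp

theorem gegenbauerCoeff_succ_succ (lam : ℝ) {n k : ℕ} (hk : 2 * k + 1 ≤ n) :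
    ((k : ℝ) + 1) * gegenbauerCoeff lam (n + 1) (k + 1) =
      -(((n - 2 * k : ℕ) : ℝ) * gegenbauerCoeff lam n k) := by
  have hs : ((n + 1 : ℕ) : ℝ) - ((k + 1 : ℕ) : ℝ) + lam = (n : ℝ) - k + lam := by push_cast; ring
  rw [gegenbauerCoeff, gegenbauerCoeff, hs, show n + 1 - 2 * (k + 1) = n - 2 * k - 1 by omega,
    show n - 2 * k = n - 2 * k - 1 + 1 by omega, Nat.factorial_succ, Nat.factorial_succ]
  push_cast
  have : ((n - 2 * k - 1 : ℕ) : ℝ) + 1 ≠ 0 := by positivity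
  field_simp
  ring

noncomputable def gegenbauerDeriv (lam : ℝ) (n : ℕ) (x : ℝ) : ℝ :=
  ∑ k ∈ range (n / 2 + 1),
    gegenbauerCoeff lam n k * (((n - 2 * k : ℕ) : ℝ) * (2 * x) ^ (n - 2 * k - 1) * 2)

theorem hasDerivAt_gegenbauer (lam : ℝ) (n : ℕ) (x : ℝ) :
    HasDerivAt (Gegenbauer lam n) (gegenbauerDeriv lam n x) x := by
  refine HasDerivAt.fun_sum fun k _ => HasDerivAt.const_mul _ ?_
  simpa using ((hasDerivAt_id x).const_mul 2).fun_pow (n - 2 * k)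

theorem natCast_mul_pow_sub_one_mul (y : ℝ) (m : ℕ) :
    (m : ℝ) * (y ^ (m - 1) * y) = m * y ^ m := by
  cases m with
  | zero => simp
  | succ m => rw [Nat.add_sub_cancel, ← pow_succ]

theorem gegenbauerDeriv_succ (lam : ℝ) (n : ℕ) (x : ℝ) :
    gegenbauerDeriv lam (n + 1) x =
      ((n : ℝ) + 2 * lam) * Gegenbauer lam n x + x * gegenbauerDeriv lam n x := by
  rw [gegenbauer_eq_sum, gegenbauerDeriv, gegenbauerDeriv, mul_sum, mul_sum, ← sum_add_distrib]
  -- for odd `n` the extra top term of the left sum carries the factor `n + 1 - 2k = 0`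
  rw [← sum_subset (range_subset_range.2 (by omega : n / 2 + 1 ≤ (n + 1) / 2 + 1))]
  · refine sum_congr rfl fun k hk => ?_
    have hk : 2 * k ≤ n := by rw [mem_range] at hk; omega
    have hc := gegenbauerCoeff_succ lam hk
    have hcast : ((n - 2 * k : ℕ) : ℝ) = n - 2 * k := by push_cast [hk]; ring
    have hpow := natCast_mul_pow_sub_one_mul (2 * x) (n - 2 * k)
    rw [show n + 1 - 2 * k - 1 = n - 2 * k by omega]
    linear_combination ((2 * x) ^ (n - 2 * k) * 2) * hc - gegenbauerCoeff lam n k * hpow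
      - (gegenbauerCoeff lam n k * (2 * x) ^ (n - 2 * k)) * hcast
  · intro k hk hk'
    simp only [mem_range] at hk hk'
    rw [show n + 1 - 2 * k = 0 by omega]
    simp

theorem mul_gegenbauerDeriv_succ_sub (lam : ℝ) (n : ℕ) (x : ℝ) :
    x * gegenbauerDeriv lam (n + 1) x - ((n : ℝ) + 1) * Gegenbauer lam (n + 1) x =
      gegenbauerDeriv lam n x := by
  have hsum : x * gegenbauerDeriv lam (n + 1) x - ((n : ℝ) + 1) * Gegenbauer lam (n + 1) x =
      ∑ k ∈ range ((n + 1) / 2 + 1),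
        -(2 * (k : ℝ)) * gegenbauerCoeff lam (n + 1) k * (2 * x) ^ (n + 1 - 2 * k) := by
    rw [gegenbauer_eq_sum, gegenbauerDeriv, mul_sum, mul_sum, ← sum_sub_distrib]
    refine sum_congr rfl fun k hk => ?_
    have hk : 2 * k ≤ n + 1 := by rw [mem_range] at hk; omega
    have hcast : ((n + 1 - 2 * k : ℕ) : ℝ) = n + 1 - 2 * k := by push_cast [hk]; ring
    have hpow := natCast_mul_pow_sub_one_mul (2 * x) (n + 1 - 2 * k)
    linear_combination gegenbauerCoeff lam (n + 1) k * hpow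
      + gegenbauerCoeff lam (n + 1) k * (2 * x) ^ (n + 1 - 2 * k) * hcast
  rw [hsum, sum_range_succ', gegenbauerDeriv]
  simp only [CharP.cast_eq_zero, mul_zero, neg_zero, zero_mul, add_zero]
  -- for even `n` the extra top term of the right sum carries the factor `n - 2k = 0`
  rw [← sum_subset (range_subset_range.2 (by omega : (n + 1) / 2 ≤ n / 2 + 1))]
  · refine sum_congr rfl fun k hk => ?_
    have hk : 2 * k + 1 ≤ n := by rw [mem_range] at hk; omega
    rw [show n + 1 - 2 * (k + 1) = n - 2 * k - 1 by omega]
    push_cast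
    linear_combination (-(2 * (2 * x) ^ (n - 2 * k - 1))) * gegenbauerCoeff_succ_succ lam hk
  · intro k hk hk'
    simp only [mem_range] at hk hk'
    rw [show n - 2 * k = 0 by omega]
    simp

theorem one_sub_mul_gegenbauerDeriv_sub_gegenbauer (lam : ℝ) (n : ℕ) (x : ℝ) :
    (1 - x) * gegenbauerDeriv lam n x - Gegenbauer lam n x =
      -((n : ℝ) + 1) * Gegenbauer lam n x +
        2 * ∑ k ∈ range n, (-1 : ℝ) ^ (k + n + 1) * ((k : ℝ) + lam) * Gegenbauer lam k x := by
  induction n with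
  | zero => simp [gegenbauerDeriv]
  | succ n ih =>
    have hsign : ∀ k, (-1 : ℝ) ^ (k + (n + 1) + 1) = -(-1) ^ (k + n + 1) := fun k => by
      rw [show k + (n + 1) + 1 = k + n + 1 + 1 by ring, pow_succ, mul_neg_one]
    have htop : (-1 : ℝ) ^ (n + n + 1) = -1 := Odd.neg_one_pow ⟨n, by ring⟩
    simp only [sum_range_succ, hsign, htop, neg_mul, sum_neg_distrib]
    push_cast
    linear_combination gegenbauerDeriv_succ lam n x - mul_gegenbauerDeriv_succ_sub lam n x - ih

theorem stmt7_general (lam : ℝ) (n : ℕ) (x : ℝ) :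
    deriv (fun y : ℝ => (1 - y) * Gegenbauer lam n y) x =
      -((n : ℝ) + 1) * Gegenbauer lam n x +
        2 * ∑ k ∈ Finset.range n, (-1 : ℝ) ^ (k + n + 1) * ((k : ℝ) + lam) * Gegenbauer lam k x := by
  have hderiv := ((hasDerivAt_id' x).const_sub 1).fun_mul (hasDerivAt_gegenbauer lam n x)
  rw [hderiv.deriv, ← one_sub_mul_gegenbauerDeriv_sub_gegenbauer]
  ring

/-- `d/dx{(1−x) C_n^λ(x)} = −(n+1) C_n^λ(x) + 2 Σ_{k=0}^{n−1} (−1)^{k+n+1}(k+λ) C_k^λ(x)`. -/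
theorem stmt7 (lam : ℝ) (hlam : 0 < lam) (n : ℕ) (x : ℝ) (hx : x ∈ Set.Icc (-1 : ℝ) 1) :
    deriv (fun y : ℝ => (1 - y) * Gegenbauer lam n y) x =
      -((n : ℝ) + 1) * Gegenbauer lam n x +
        2 * ∑ k ∈ Finset.range n, (-1 : ℝ) ^ (k + n + 1) * ((k : ℝ) + lam) * Gegenbauer lam k x :=
  stmt7_general lam n x
end

section
/- For every λ > −1/2, n ∈ ℕ₀ and x ∈ [−1,1]: applying I^λ_+ to the function t ↦ ₂F₁(−n, n+2λ+1; λ+1; (1+t)/2) gives √π (Γ(λ+1)/Γ(λ+3/2)) (1+x) ₂F₁(−n, n+2λ+1; λ+3/2; (1+x)/2), and applying I^λ_− to the function t ↦ ₂F₁(−n, n+2λ+1; λ+1; (1−t)/2) gives √π (Γ(λ+1)/Γ(λ+3/2)) (1−x) ₂F₁(−n, n+2λ+1; λ+3/2; (1−x)/2). -/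
open Real MeasureTheory Finset intervalIntegral

/-!
Substituting `τ = (1 + x) s - 1` turns `I^λ_+ f (x)` into `(1 + x)` times the integral of
`f ((1 + x) s - 1)` against the Beta weight `s ^ λ (1 - s) ^ (-1/2)`. Integrating termwise with the
Beta moments `∫ s ^ (c - 1 + k) (1 - s) ^ (d - 1) = B(c, d) (c)_k / (c + d)_k` gives Euler's formula
`∫ s ^ (c - 1) (1 - s) ^ (d - 1) ₂F₁(-m, b; c; z s) ds = B(c, d) ₂F₁(-m, b; c + d; z)`, which for
`c = λ + 1`, `d = 1/2` is the claim since `Γ(1/2) = √π`. The reflection `t ↦ -t` turns `I^λ_-` into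
`I^λ_+`.
-/

theorem intervalIntegrable_rpow_mul_one_sub_rpow {a b : ℝ} (ha : -1 < a) (hb : -1 < b) :
    IntervalIntegrable (fun s : ℝ => s ^ a * (1 - s) ^ b) volume 0 1 := by
  refine IntervalIntegrable.trans (b := 1 / 2) ?_ ?_
  · refine (intervalIntegrable_rpow' ha).mul_continuousOn
      (ContinuousOn.rpow_const (by fun_prop) fun s hs => Or.inl ?_)
    rw [Set.uIcc_of_le (by norm_num)] at hs
    linarith [hs.2]
  · have hsub : IntervalIntegrable (fun s : ℝ => (1 - s) ^ b) volume (1 / 2) 1 := by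
      convert (intervalIntegrable_rpow' (a := 1 / 2) (b := 0) hb).comp_sub_left 1 using 1 <;>
        norm_num
    refine hsub.continuousOn_mul
      (ContinuousOn.rpow_const (by fun_prop) fun s hs => Or.inl ?_)
    rw [Set.uIcc_of_le (by norm_num)] at hs
    linarith [hs.1]

theorem integral_rpow_mul_one_sub_rpow {a b : ℝ} (ha : 0 < a) (hb : 0 < b) :
    ∫ s in (0 : ℝ)..1, s ^ (a - 1) * (1 - s) ^ (b - 1) = Gamma a * Gamma b / Gamma (a + b) := by
  have hbeta := Complex.betaIntegral_eq_Gamma_mul_div a b (by simpa) (by simpa)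
  have hreal : Complex.betaIntegral a b =
      ((∫ s in (0 : ℝ)..1, s ^ (a - 1) * (1 - s) ^ (b - 1) : ℝ) : ℂ) := by
    rw [Complex.betaIntegral, ← intervalIntegral.integral_ofReal]
    refine integral_congr fun s hs => ?_
    rw [Set.uIcc_of_le zero_le_one] at hs
    simp only [Complex.ofReal_mul, Complex.ofReal_cpow hs.1,
      Complex.ofReal_cpow (sub_nonneg.2 hs.2), Complex.ofReal_sub, Complex.ofReal_one]
  rw [hreal, ← Complex.ofReal_add, Complex.Gamma_ofReal, Complex.Gamma_ofReal,
    Complex.Gamma_ofReal, ← Complex.ofReal_mul, ← Complex.ofReal_div] at hbeta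
  exact_mod_cast hbeta

theorem Gamma_add_nat_eq_mul_ascPochhammer {a : ℝ} (ha : 0 < a) (k : ℕ) :
    Gamma (a + k) = Gamma a * (ascPochhammer ℝ k).eval a := by
  induction k with
  | zero => simp
  | succ k ih =>
    rw [Nat.cast_succ, ← add_assoc, Gamma_add_one (by positivity), ih, ascPochhammer_succ_eval]
    ring

theorem integral_rpow_mul_one_sub_rpow_mul_pow {a b : ℝ} (ha : 0 < a) (hb : 0 < b) (k : ℕ) :
    ∫ s in (0 : ℝ)..1, s ^ (a - 1) * (1 - s) ^ (b - 1) * s ^ k =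
      Gamma a * Gamma b / Gamma (a + b) *
        ((ascPochhammer ℝ k).eval a / (ascPochhammer ℝ k).eval (a + b)) := by
  have hshift : ∫ s in (0 : ℝ)..1, s ^ (a - 1) * (1 - s) ^ (b - 1) * s ^ k =
      ∫ s in (0 : ℝ)..1, s ^ (a + k - 1) * (1 - s) ^ (b - 1) := by
    refine integral_congr_ae (Filter.Eventually.of_forall fun s hs => ?_)
    rw [Set.uIoc_of_le zero_le_one] at hs
    rw [show a + k - 1 = a - 1 + k by ring, rpow_add hs.1, rpow_natCast]
    ring
  have hPa := ascPochhammer_pos k a ha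
  have hPab := ascPochhammer_pos k (a + b) (add_pos ha hb)
  have hGab := Gamma_pos_of_pos (add_pos ha hb)
  rw [hshift, integral_rpow_mul_one_sub_rpow (by positivity) hb,
    show a + k + b = a + b + k by ring, Gamma_add_nat_eq_mul_ascPochhammer ha,
    Gamma_add_nat_eq_mul_ascPochhammer (add_pos ha hb)]
  field_simp

theorem integral_rpow_mul_one_sub_rpow_mul_hyp2F1 {c d : ℝ} (hc : 0 < c) (hd : 0 < d)
    (m : ℕ) (b z : ℝ) :
    ∫ s in (0 : ℝ)..1, s ^ (c - 1) * (1 - s) ^ (d - 1) * hyp2F1 m b c (z * s) =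
      Gamma c * Gamma d / Gamma (c + d) * hyp2F1 m b (c + d) z := by
  have hweight := intervalIntegrable_rpow_mul_one_sub_rpow (a := c - 1) (b := d - 1)
    (by linarith) (by linarith)
  simp only [hyp2F1, mul_sum]
  rw [intervalIntegral.integral_finsetSum fun k _ => hweight.mul_continuousOn (by fun_prop)]
  refine sum_congr rfl fun k _ => ?_
  have hcoeff : ∀ A s : ℝ, s ^ (c - 1) * (1 - s) ^ (d - 1) * (A * (z * s) ^ k) =
      A * z ^ k * (s ^ (c - 1) * (1 - s) ^ (d - 1) * s ^ k) := fun A s => by ring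
  have hPc := ascPochhammer_pos k c hc
  have hPcd := ascPochhammer_pos k (c + d) (add_pos hc hd)
  simp only [hcoeff, intervalIntegral.integral_const_mul,
    integral_rpow_mul_one_sub_rpow_mul_pow hc hd]
  field_simp

theorem Iplus_eq_mul_integral (lam : ℝ) (f : ℝ → ℝ) {x : ℝ} (hx : -1 < x) :
    Iplus lam f x =
      (1 + x) * ∫ s in (0 : ℝ)..1, s ^ lam * (1 - s) ^ (-(1 / 2) : ℝ) * f ((1 + x) * s - 1) := by
  have hx₀ : 0 < 1 + x := by linarith
  have hsubst := integral_comp_mul_add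
    (fun τ => (x - τ) ^ (-(1 / 2) : ℝ) * (1 + τ) ^ lam * f τ) hx₀.ne' (-1) (a := 0) (b := 1)
  simp only [mul_zero, zero_add, mul_one, smul_eq_mul, show 1 + x + -1 = x by ring] at hsubst
  have hscale : ∀ s ∈ Set.uIcc (0 : ℝ) 1,
      (x - ((1 + x) * s + -1)) ^ (-(1 / 2) : ℝ) * (1 + ((1 + x) * s + -1)) ^ lam *
        f ((1 + x) * s + -1) =
      ((1 + x) ^ (-(1 / 2) : ℝ) * (1 + x) ^ lam) *
        (s ^ lam * (1 - s) ^ (-(1 / 2) : ℝ) * f ((1 + x) * s - 1)) := by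
    intro s hs
    rw [Set.uIcc_of_le zero_le_one] at hs
    rw [show x - ((1 + x) * s + -1) = (1 + x) * (1 - s) by ring,
      show 1 + ((1 + x) * s + -1) = (1 + x) * s by ring, ← sub_eq_add_neg,
      mul_rpow hx₀.le (sub_nonneg.2 hs.2), mul_rpow hx₀.le hs.1]
    ring
  have hpow : (1 + x) ^ (-lam + 1 / 2) * ((1 + x) ^ (-(1 / 2) : ℝ) * (1 + x) ^ lam) = 1 := by
    rw [← rpow_add hx₀, ← rpow_add hx₀, show -lam + 1 / 2 + (-(1 / 2) + lam) = 0 by ring,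
      rpow_zero]
  rw [integral_congr hscale, intervalIntegral.integral_const_mul,
    eq_inv_mul_iff_mul_eq₀ hx₀.ne'] at hsubst
  rw [Iplus, ← hsubst, mul_left_comm, ← mul_assoc ((1 + x) ^ (-lam + 1 / 2)), hpow, one_mul]

theorem Iplus_hyp2F1 {lam : ℝ} (hlam : -1 < lam) (m : ℕ) (b : ℝ) {x : ℝ} (hx : -1 ≤ x) :
    Iplus lam (fun t => hyp2F1 m b (lam + 1) ((1 + t) / 2)) x =
      √π * (Gamma (lam + 1) / Gamma (lam + 3 / 2)) * (1 + x) *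
        hyp2F1 m b (lam + 3 / 2) ((1 + x) / 2) := by
  rcases hx.eq_or_lt with rfl | hx
  · simp [Iplus]
  have heuler := integral_rpow_mul_one_sub_rpow_mul_hyp2F1 (c := lam + 1) (d := 1 / 2)
    (by linarith) one_half_pos m b ((1 + x) / 2)
  rw [add_sub_cancel_right, show (1 / 2 : ℝ) - 1 = -(1 / 2) by norm_num, Gamma_one_half_eq,
    show lam + 1 + 1 / 2 = lam + 3 / 2 by ring] at heuler
  rw [Iplus_eq_mul_integral lam _ hx]
  simp only [show ∀ s, (1 + ((1 + x) * s - 1)) / 2 = (1 + x) / 2 * s from fun s => by ring,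
    heuler]
  ring

theorem Iminus_eq_Iplus_comp_neg (lam : ℝ) (f : ℝ → ℝ) (x : ℝ) :
    Iminus lam f x = Iplus lam (fun t => f (-t)) (-x) := by
  rw [Iminus, Iplus, ← sub_eq_add_neg, ← integral_comp_neg]
  simp only [neg_neg, sub_neg_eq_add, ← sub_eq_neg_add, ← sub_eq_add_neg]

/-- action of `I^λ_±` on the hypergeometric polynomials
`₂F₁(−n, n+2λ+1; λ+1; (1±t)/2)`. -/
theorem stmt16 (lam : ℝ) (hlam : -(1 / 2) < lam) (n : ℕ) (x : ℝ)
    (hx : x ∈ Set.Icc (-1 : ℝ) 1) :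
    Iplus lam (fun t => hyp2F1 n ((n : ℝ) + 2 * lam + 1) (lam + 1) ((1 + t) / 2)) x =
      Real.sqrt Real.pi * (Real.Gamma (lam + 1) / Real.Gamma (lam + 3 / 2)) * (1 + x) *
        hyp2F1 n ((n : ℝ) + 2 * lam + 1) (lam + 3 / 2) ((1 + x) / 2) ∧
    Iminus lam (fun t => hyp2F1 n ((n : ℝ) + 2 * lam + 1) (lam + 1) ((1 - t) / 2)) x =
      Real.sqrt Real.pi * (Real.Gamma (lam + 1) / Real.Gamma (lam + 3 / 2)) * (1 - x) *
        hyp2F1 n ((n : ℝ) + 2 * lam + 1) (lam + 3 / 2) ((1 - x) / 2) := by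
  have hlam' : -1 < lam := by linarith
  refine ⟨Iplus_hyp2F1 hlam' n _ hx.1, ?_⟩
  rw [Iminus_eq_Iplus_comp_neg]
  simp only [sub_neg_eq_add]
  rw [Iplus_hyp2F1 hlam' n _ (neg_le_neg hx.2), ← sub_eq_add_neg]
end
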